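/- arXiv:2309.06801 — 8 statements merged into one kernel-verified Lean document; each statement's English description precedes it below -/
import Mathlib

section
/- For a signed graph G: a_sd(G) = 2 if and only if every vertex has negative degree at least 2, and there exist two adjacent vertices u, v (adjacent via a positive or negative edge) with deg^-(u) = deg^-(v) = 2. -/
open Set

variable {V : Type*}

/-- Number of `G`-neighbors of `v` inside the set `S`. -/
noncomputable def ndegOn (G : SimpleGraph V) (S : Set V) (v : V) : ℕ := (S ∩ {u | G.Adj v u}).ncard

/-- Total number of `G`-neighbors of `v`. -/
noncomputable def ndeg (G : SimpleGraph V) (v : V) : ℕ := {u | G.Adj v u}.ncard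

/-- `S` is a defensive alliance in the signed graph `(V, Gp, Gn)`. -/
def IsDefAlliance (Gp Gn : SimpleGraph V) (S : Set V) : Prop :=
  S.Nonempty ∧ ∀ v ∈ S,
    ndegOn Gn S v ≤ ndegOn Gp S v + 1 ∧ ndegOn Gn Sᶜ v ≤ ndegOn Gp S v + 1

/-- Defensive alliance number: minimum size of a defensive alliance. -/
noncomputable def asd (Gp Gn : SimpleGraph V) : ℕ :=
  sInf {n | ∃ S : Set V, IsDefAlliance Gp Gn S ∧ S.ncard = n}

lemma ndegOn_pair_adj (G : SimpleGraph V) {u v : V} (h : G.Adj u v) :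
    ndegOn G {u, v} u = 1 := by
  have : ({u, v} : Set V) ∩ {w | G.Adj u w} = {v} := by
    ext w
    simp only [mem_inter_iff, mem_insert_iff, mem_singleton_iff, mem_setOf_eq]
    constructor
    · rintro ⟨rfl | rfl, hw⟩
      · exact absurd hw (G.irrefl)
      · rfl
    · rintro rfl; exact ⟨Or.inr rfl, h⟩
  rw [ndegOn, this, ncard_singleton]

lemma ndegOn_pair_not_adj (G : SimpleGraph V) {u v : V} (h : ¬ G.Adj u v) :
    ndegOn G {u, v} u = 0 := by
  have : ({u, v} : Set V) ∩ {w | G.Adj u w} = ∅ := by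
    ext w
    simp only [mem_inter_iff, mem_insert_iff, mem_singleton_iff, mem_setOf_eq,
      mem_empty_iff_false, iff_false, not_and]
    rintro (rfl | rfl)
    · exact G.irrefl
    · exact h
  rw [ndegOn, this, ncard_empty]

lemma ndegOn_compl_pair_of_not_adj (G : SimpleGraph V) {u v : V} (h : ¬ G.Adj u v) :
    ndegOn G ({u, v} : Set V)ᶜ u = ndeg G u := by
  rw [ndegOn, ndeg]
  congr 1
  ext w
  simp only [mem_inter_iff, mem_compl_iff, mem_insert_iff, mem_singleton_iff, mem_setOf_eq]
  constructor
  · exact fun hw => hw.2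
  · intro hw
    refine ⟨?_, hw⟩
    rintro (rfl | rfl)
    · exact G.irrefl hw
    · exact h hw

lemma ndeg_eq_of_adj [Fintype V] (G : SimpleGraph V) {u v : V} (h : G.Adj u v) :
    ndeg G u = ndegOn G ({u, v} : Set V)ᶜ u + 1 := by
  have hset : ({u, v} : Set V)ᶜ ∩ {w | G.Adj u w} = {w | G.Adj u w} \ {v} := by
    ext w
    simp only [mem_inter_iff, mem_compl_iff, mem_insert_iff, mem_singleton_iff, mem_setOf_eq,
      mem_diff]
    constructor
    · exact fun hw => ⟨hw.2, fun hv => hw.1 (Or.inr hv)⟩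
    · rintro ⟨hw, hv⟩
      refine ⟨?_, hw⟩
      rintro (rfl | rfl)
      · exact G.irrefl hw
      · exact hv rfl
  have hv : v ∈ {w | G.Adj u w} := h
  have := Set.ncard_diff_singleton_add_one hv (toFinite _)
  rw [ndegOn, hset, ndeg, this]

lemma singleton_alliance_iff [Fintype V] (Gp Gn : SimpleGraph V) (v : V) :
    IsDefAlliance Gp Gn {v} ↔ ndeg Gn v ≤ 1 := by
  have hpair : ({v} : Set V) = {v, v} := (Set.pair_eq_singleton v).symm
  constructor
  · rintro ⟨-, h⟩
    obtain ⟨-, h2⟩ := h v rfl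
    rw [hpair, ndegOn_compl_pair_of_not_adj Gn Gn.irrefl,
      ndegOn_pair_not_adj Gp Gp.irrefl] at h2
    simpa using h2
  · intro h
    refine ⟨⟨v, rfl⟩, ?_⟩
    intro w hw
    rw [mem_singleton_iff] at hw
    subst hw
    rw [hpair, ndegOn_compl_pair_of_not_adj Gn Gn.irrefl,
      ndegOn_pair_not_adj Gp Gp.irrefl, ndegOn_pair_not_adj Gn Gn.irrefl]
    omega

lemma pair_cond [Fintype V] (Gp Gn : SimpleGraph V)
    (hdj : ∀ a b, Gp.Adj a b → Gn.Adj a b → False)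
    {u v : V} (hadj : Gp.Adj u v ∨ Gn.Adj u v) (hu : ndeg Gn u = 2) :
    ndegOn Gn ({u, v} : Set V) u ≤ ndegOn Gp ({u, v} : Set V) u + 1 ∧
    ndegOn Gn ({u, v} : Set V)ᶜ u ≤ ndegOn Gp ({u, v} : Set V) u + 1 := by
  rcases hadj with hp | hn
  · have hn' : ¬ Gn.Adj u v := fun h => hdj _ _ hp h
    rw [ndegOn_pair_adj Gp hp, ndegOn_pair_not_adj Gn hn',
      ndegOn_compl_pair_of_not_adj Gn hn', hu]
    omega
  · have hp' : ¬ Gp.Adj u v := fun h => hdj _ _ h hn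
    have hd := ndeg_eq_of_adj Gn hn
    rw [ndegOn_pair_adj Gn hn, ndegOn_pair_not_adj Gp hp']
    omega

theorem stmt3 [Fintype V] (Gp Gn : SimpleGraph V) (hdisj : Disjoint Gp Gn) :
    asd Gp Gn = 2 ↔
      (∀ v : V, 2 ≤ ndeg Gn v) ∧
      ∃ u v : V, (Gp.Adj u v ∨ Gn.Adj u v) ∧ ndeg Gn u = 2 ∧ ndeg Gn v = 2 := by
  have hdj : ∀ a b : V, Gp.Adj a b → Gn.Adj a b → False := by
    intro a b hp hn
    have hb : (Gp ⊓ Gn).Adj a b := ⟨hp, hn⟩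
    exact hdisj.le_bot hb
  set T := {n | ∃ S : Set V, IsDefAlliance Gp Gn S ∧ S.ncard = n} with hT
  constructor
  · intro h
    rw [asd, ← hT] at h
    have hne : T.Nonempty := by
      rcases T.eq_empty_or_nonempty with he | hne
      · rw [he, Nat.sInf_empty] at h; omega
      · exact hne
    have h2 : 2 ∈ T := h ▸ Nat.sInf_mem hne
    have h1 : 1 ∉ T := fun h1 => by
      have := Nat.sInf_le h1; omega
    have hdeg : ∀ w : V, 2 ≤ ndeg Gn w := by
      intro w
      by_contra hc
      push_neg at hc
      exact h1 ⟨{w}, (singleton_alliance_iff Gp Gn w).mpr (by omega), ncard_singleton w⟩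
    refine ⟨hdeg, ?_⟩
    obtain ⟨S, hS, hc⟩ := h2
    obtain ⟨u, v, huv, rfl⟩ := Set.ncard_eq_two.mp hc
    have hcu := (hS.2 u (Or.inl rfl)).2
    have hcv := (hS.2 v (Or.inr rfl)).2
    rw [Set.pair_comm u v] at hcv
    have key : ∀ a b : V, ndegOn Gn ({a, b} : Set V)ᶜ a ≤ ndegOn Gp ({a, b} : Set V) a + 1 →
        (Gp.Adj a b ∨ Gn.Adj a b) ∧ ndeg Gn a = 2 := by
      intro a b hcond
      by_cases hp : Gp.Adj a b
      · have hn' : ¬ Gn.Adj a b := fun hh => hdj _ _ hp hh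
        rw [ndegOn_pair_adj Gp hp, ndegOn_compl_pair_of_not_adj Gn hn'] at hcond
        exact ⟨Or.inl hp, by have := hdeg a; omega⟩
      · by_cases hn : Gn.Adj a b
        · have hd := ndeg_eq_of_adj Gn hn
          rw [ndegOn_pair_not_adj Gp hp] at hcond
          exact ⟨Or.inr hn, by have := hdeg a; omega⟩
        · rw [ndegOn_pair_not_adj Gp hp, ndegOn_compl_pair_of_not_adj Gn hn] at hcond
          have := hdeg a
          omega
    obtain ⟨hadju, hu⟩ := key u v hcu
    obtain ⟨_, hv⟩ := key v u hcv
    exact ⟨u, v, hadju, hu, hv⟩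
  · rintro ⟨hdeg, u, v, hadj, hu, hv⟩
    have huv : u ≠ v := hadj.elim (fun h => h.ne) (fun h => h.ne)
    have halliance : IsDefAlliance Gp Gn {u, v} := by
      refine ⟨⟨u, Or.inl rfl⟩, ?_⟩
      intro w hw
      rcases hw with rfl | hw
      · exact pair_cond Gp Gn hdj hadj hu
      · rw [mem_singleton_iff] at hw
        subst hw
        rw [Set.pair_comm u w]
        exact pair_cond Gp Gn hdj (hadj.imp (fun h => h.symm) (fun h => h.symm)) hv
    have h2 : 2 ∈ T := ⟨{u, v}, halliance, Set.ncard_pair huv⟩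
    rw [asd, ← hT]
    refine le_antisymm (Nat.sInf_le h2) ?_
    refine le_csInf ⟨2, h2⟩ ?_
    rintro n ⟨S, hS, rfl⟩
    have hn1 : 0 < S.ncard := (Set.ncard_pos (toFinite S)).mpr hS.1
    rcases Nat.lt_or_ge S.ncard 2 with hlt | hge
    · exfalso
      have hone : S.ncard = 1 := by omega
      obtain ⟨w, rfl⟩ := Set.ncard_eq_one.mp hone
      have := (singleton_alliance_iff Gp Gn w).mp hS
      have := hdeg w
      omega
    · exact hge
end

section
/- Let C be a signed graph whose underlying unsigned graph is a cycle. If C has at least one positive edge then a_sd(C) = 1; if all edges of C are negative then a_sd(C) = 2. -/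
open Set

variable {V : Type*}

/-! A signed cycle is 2-regular, so a vertex with a positive edge has at most one negative
neighbour and is an alliance by itself. In an all-negative cycle a single vertex has two
negative neighbours outside it, which the slack `+ 1` cannot absorb, whereas each end of an edge
has just one negative neighbour inside the pair and one outside it. -/

section Degrees

variable {G : SimpleGraph V}

lemma ndegOn_add_ndegOn_compl [Finite V] (G : SimpleGraph V) (S : Set V) (v : V) :
    ndegOn G S v + ndegOn G Sᶜ v = ndeg G v := by
  rw [ndegOn, ndegOn, ndeg, ← ncard_union_eq
    (disjoint_compl_right.mono inter_subset_left inter_subset_left),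
    ← union_inter_distrib_right, union_compl_self, univ_inter]

@[simp]
lemma ndegOn_bot (S : Set V) (v : V) : ndegOn (⊥ : SimpleGraph V) S v = 0 := by
  simp [ndegOn]

@[simp]
lemma ndegOn_singleton_self (G : SimpleGraph V) (v : V) : ndegOn G {v} v = 0 := by
  simp [ndegOn]

lemma ndegOn_pair_left {a b : V} (hab : G.Adj a b) : ndegOn G {a, b} a = 1 := by
  have : ({a, b} : Set V) ∩ {x | G.Adj a x} = {b} := by
    ext x
    simp only [mem_inter_iff, mem_insert_iff, mem_singleton_iff, mem_ofPred_eq]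
    constructor
    · rintro ⟨rfl | rfl, h⟩
      · exact absurd h (G.loopless.irrefl _)
      · rfl
    · rintro rfl
      exact ⟨Or.inr rfl, hab⟩
  rw [ndegOn, this, ncard_singleton]

lemma ndegOn_compl_singleton_self [Finite V] (G : SimpleGraph V) (v : V) :
    ndegOn G {v}ᶜ v = ndeg G v := by
  simpa using ndegOn_add_ndegOn_compl G {v} v

lemma one_le_ndeg_of_adj [Finite V] {u v : V} (huv : G.Adj u v) : 1 ≤ ndeg G u :=
  (ncard_pos (toFinite _)).2 ⟨v, huv⟩

lemma exists_adj_of_ndeg_ne_zero {v : V} (hv : ndeg G v ≠ 0) : ∃ u, G.Adj v u :=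
  nonempty_of_ncard_ne_zero hv

lemma ndeg_sup_of_disjoint [Finite V] {Gp Gn : SimpleGraph V} (hdisj : Disjoint Gp Gn) (v : V) :
    ndeg (Gp ⊔ Gn) v = ndeg Gp v + ndeg Gn v := by
  have hd : Disjoint {u | Gp.Adj v u} {u | Gn.Adj v u} := disjoint_left.2 fun u hp hn => by
    have : (Gp ⊓ Gn).Adj v u := ⟨hp, hn⟩
    rwa [disjoint_iff.1 hdisj] at this
  rw [ndeg, ndeg, ndeg, ← ncard_union_eq hd]
  rfl

end Degrees

section Alliances

variable {Gp Gn : SimpleGraph V}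

lemma IsDefAlliance.one_le_ncard [Finite V] {S : Set V} (hS : IsDefAlliance Gp Gn S) :
    1 ≤ S.ncard :=
  (ncard_pos (toFinite _)).2 hS.1

lemma isDefAlliance_singleton_iff [Finite V] {v : V} :
    IsDefAlliance Gp Gn {v} ↔ ndeg Gn v ≤ 1 := by
  simp [IsDefAlliance, ndegOn_compl_singleton_self]

lemma isDefAlliance_bot_pair [Finite V] {a b : V} (hab : Gn.Adj a b)
    (ha : ndeg Gn a ≤ 2) (hb : ndeg Gn b ≤ 2) : IsDefAlliance ⊥ Gn {a, b} := by
  have key : ∀ x y, Gn.Adj x y → ndeg Gn x ≤ 2 →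
      ndegOn Gn {x, y} x ≤ 1 ∧ ndegOn Gn ({x, y} : Set V)ᶜ x ≤ 1 := fun x y hxy hx => by
    have := ndegOn_add_ndegOn_compl Gn {x, y} x
    rw [ndegOn_pair_left hxy] at this ⊢
    omega
  refine ⟨insert_nonempty a {b}, ?_⟩
  rintro w (rfl | rfl)
  · simpa using key w b hab ha
  · simpa [pair_comm] using key w a hab.symm hb

lemma two_le_ncard_of_isDefAlliance_bot [Finite V] (hGn : ∀ v, ndeg Gn v = 2) {S : Set V}
    (hS : IsDefAlliance ⊥ Gn S) : 2 ≤ S.ncard := by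
  by_contra! h
  obtain ⟨v, rfl⟩ := ncard_eq_one.1 (by have := hS.one_le_ncard; omega : S.ncard = 1)
  have := hGn v ▸ isDefAlliance_singleton_iff.1 hS
  omega

lemma asd_eq_of_isDefAlliance {S : Set V} {k : ℕ} (hS : IsDefAlliance Gp Gn S)
    (hSk : S.ncard = k) (hmin : ∀ T, IsDefAlliance Gp Gn T → k ≤ T.ncard) : asd Gp Gn = k :=
  le_antisymm (Nat.sInf_le ⟨S, hS, hSk⟩)
    (le_csInf ⟨k, S, hS, hSk⟩ fun _ ⟨T, hT, hTn⟩ => hTn ▸ hmin T hT)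

end Alliances

theorem stmt5 [Fintype V] (Gp Gn : SimpleGraph V) (hdisj : Disjoint Gp Gn)
    (hconn : (Gp ⊔ Gn).Connected) (hreg : ∀ v : V, ndeg (Gp ⊔ Gn) v = 2) :
    ((∃ u v : V, Gp.Adj u v) → asd Gp Gn = 1) ∧ (Gp = ⊥ → asd Gp Gn = 2) := by
  refine ⟨fun ⟨u, v, huv⟩ => ?_, fun hGp => ?_⟩
  · have hu : ndeg Gn u ≤ 1 := by
      have := ndeg_sup_of_disjoint hdisj u
      have := one_le_ndeg_of_adj huv
      have := hreg u
      omega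
    exact asd_eq_of_isDefAlliance (isDefAlliance_singleton_iff.2 hu) (ncard_singleton u)
      fun _ hT => hT.one_le_ncard
  · subst hGp
    have hGn : ∀ v, ndeg Gn v = 2 := by simpa using hreg
    obtain ⟨v⟩ := hconn.nonempty
    obtain ⟨u, hvu⟩ := exists_adj_of_ndeg_ne_zero (by rw [hGn v]; omega : ndeg Gn v ≠ 0)
    exact asd_eq_of_isDefAlliance (isDefAlliance_bot_pair hvu (hGn v).le (hGn u).le)
      (ncard_pair hvu.ne) fun _ hT => two_le_ncard_of_isDefAlliance_bot hGn hT
end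

section
/- If S is a defensive alliance of minimum cardinality in a signed graph G = (V, E^+, E^-), then S induces a connected subgraph of the underlying unsigned graph (V, E^+ ∪ E^-). -/
open Set

variable {V : Type*}

theorem stmt9 [Fintype V] (Gp Gn : SimpleGraph V) (hdisj : Disjoint Gp Gn)
    (S : Set V) (hS : IsDefAlliance Gp Gn S)
    (hmin : ∀ T : Set V, IsDefAlliance Gp Gn T → S.ncard ≤ T.ncard) :
    ((Gp ⊔ Gn).induce S).Connected := by
  obtain ⟨⟨v₀, hv₀⟩, hdef⟩ := hS
  set G := (Gp ⊔ Gn).induce S with hG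
  set C : Set V := {v | ∃ h : v ∈ S, G.Reachable ⟨v₀, hv₀⟩ ⟨v, h⟩} with hC
  have hCS : C ⊆ S := fun v hv => hv.1
  have hv₀C : v₀ ∈ C := ⟨hv₀, SimpleGraph.Reachable.refl _⟩
  have hclose : ∀ v ∈ C, ∀ u ∈ S, (Gp ⊔ Gn).Adj v u → u ∈ C := by
    rintro v ⟨hvS, hr⟩ u huS hadj
    refine ⟨huS, hr.trans (SimpleGraph.Adj.reachable ?_)⟩
    exact hadj
  have hdegeq : ∀ v ∈ C, ∀ H : SimpleGraph V, H ≤ Gp ⊔ Gn →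
      ndegOn H C v = ndegOn H S v := by
    intro v hv H hle
    unfold ndegOn
    congr 1
    ext u
    simp only [Set.mem_inter_iff, Set.mem_setOf_eq]
    constructor
    · rintro ⟨hu, ha⟩; exact ⟨hCS hu, ha⟩
    · rintro ⟨hu, ha⟩
      exact ⟨hclose v hv u hu (hle ha), ha⟩
  have hcomp : ∀ v ∈ C, ndegOn Gn Cᶜ v = ndegOn Gn Sᶜ v := by
    intro v hv
    unfold ndegOn
    congr 1
    ext u
    simp only [Set.mem_inter_iff, Set.mem_compl_iff, Set.mem_setOf_eq]
    constructor
    · rintro ⟨hu, ha⟩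
      exact ⟨fun huS => hu (hclose v hv u huS ((SimpleGraph.sup_adj _ _ _ _).mpr (Or.inr ha))), ha⟩
    · rintro ⟨hu, ha⟩
      exact ⟨fun huC => hu (hCS huC), ha⟩
  have hCall : IsDefAlliance Gp Gn C := by
    refine ⟨⟨v₀, hv₀C⟩, fun v hv => ?_⟩
    obtain ⟨h1, h2⟩ := hdef v (hCS hv)
    rw [hdegeq v hv Gp le_sup_left, hdegeq v hv Gn le_sup_right, hcomp v hv]
    exact ⟨h1, h2⟩
  have hCeq : C = S :=
    Set.eq_of_subset_of_ncard_le hCS (hmin C hCall) (Set.toFinite S)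
  haveI : Nonempty ↑S := ⟨⟨v₀, hv₀⟩⟩
  refine SimpleGraph.Connected.mk ?_
  · rintro ⟨u, hu⟩ ⟨w, hw⟩
    obtain ⟨hu', hru⟩ : u ∈ C := hCeq.symm ▸ hu
    obtain ⟨hw', hrw⟩ : w ∈ C := hCeq.symm ▸ hw
    exact hru.symm.trans hrw
end

section
/- Every inclusion-minimal defensive alliance S of a signed graph G = (V, E^+, E^-) is connected in the underlying unsigned graph (V, E^+ ∪ E^-). -/
open Set

variable {V : Type*}

theorem stmt10 [Fintype V] (Gp Gn : SimpleGraph V) (hdisj : Disjoint Gp Gn)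
    (S : Set V) (hS : IsDefAlliance Gp Gn S)
    (hmin : ∀ T : Set V, T ⊂ S → ¬ IsDefAlliance Gp Gn T) :
    ((Gp ⊔ Gn).induce S).Connected := by
  set G := Gp ⊔ Gn with hG
  rw [SimpleGraph.connected_iff]
  obtain ⟨v0, hv0⟩ := hS.1
  refine ⟨?_, ⟨⟨v0, hv0⟩⟩⟩
  intro x y
  by_contra hxy
  -- the reachable component of x within S
  set T : Set V := {v : V | ∃ h : v ∈ S, (G.induce S).Reachable x ⟨v, h⟩} with hT
  have hTS : T ⊆ S := fun v hv => hv.1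
  have hxT : (x : V) ∈ T := ⟨x.2, by exact SimpleGraph.Reachable.refl _⟩
  have hyT : (y : V) ∉ T := by
    rintro ⟨h, r⟩
    exact hxy (by convert r)
  have hTssub : T ⊂ S := ⟨hTS, fun hsub => hyT (hsub y.2)⟩
  -- closure of T under G-adjacency within S
  have hclosed : ∀ v ∈ T, ∀ u, G.Adj v u → u ∈ S → u ∈ T := by
    rintro v ⟨hvS, hr⟩ u hadj huS
    exact ⟨huS, hr.trans (SimpleGraph.Adj.reachable (by exact hadj))⟩
  apply hmin T hTssub
  refine ⟨⟨x, hxT⟩, ?_⟩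
  intro v hvT
  have hvS : v ∈ S := hTS hvT
  have hGp : S ∩ {u | Gp.Adj v u} = T ∩ {u | Gp.Adj v u} := by
    ext u
    constructor
    · rintro ⟨huS, hadj⟩
      exact ⟨hclosed v hvT u (Or.inl hadj) huS, hadj⟩
    · rintro ⟨huT, hadj⟩
      exact ⟨hTS huT, hadj⟩
  have hGn : S ∩ {u | Gn.Adj v u} = T ∩ {u | Gn.Adj v u} := by
    ext u
    constructor
    · rintro ⟨huS, hadj⟩
      exact ⟨hclosed v hvT u (Or.inr hadj) huS, hadj⟩
    · rintro ⟨huT, hadj⟩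
      exact ⟨hTS huT, hadj⟩
  have hGnc : Tᶜ ∩ {u | Gn.Adj v u} = Sᶜ ∩ {u | Gn.Adj v u} := by
    ext u
    constructor
    · rintro ⟨huT, hadj⟩
      refine ⟨fun huS => huT (hclosed v hvT u (Or.inr hadj) huS), hadj⟩
    · rintro ⟨huS, hadj⟩
      exact ⟨fun huT => huS (hTS huT), hadj⟩
  have h := hS.2 v hvS
  constructor
  · calc ndegOn Gn T v = ndegOn Gn S v := by unfold ndegOn; rw [hGn]
      _ ≤ ndegOn Gp S v + 1 := h.1
      _ = ndegOn Gp T v + 1 := by unfold ndegOn; rw [hGp]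
  · calc ndegOn Gn Tᶜ v = ndegOn Gn Sᶜ v := by unfold ndegOn; rw [hGnc]
      _ ≤ ndegOn Gp S v + 1 := h.2
      _ = ndegOn Gp T v + 1 := by unfold ndegOn; rw [hGp]
end

section
/- Any connected component (in the underlying unsigned graph) of the subgraph induced by a defensive alliance S of a signed graph G is itself a defensive alliance of G. -/
open Set

variable {V : Type*}

theorem stmt11 [Fintype V] (Gp Gn : SimpleGraph V) (hdisj : Disjoint Gp Gn)
    (S : Set V) (hS : IsDefAlliance Gp Gn S) (v : V) (hv : v ∈ S) (C : Set V)
    (hC : ∀ u : V, u ∈ C ↔ ∃ hu : u ∈ S,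
      ((Gp ⊔ Gn).induce S).Reachable ⟨v, hv⟩ ⟨u, hu⟩) :
    IsDefAlliance Gp Gn C := by
  obtain ⟨hne, hdef⟩ := hS
  have hCS : C ⊆ S := fun u hu => ((hC u).1 hu).1
  have hvC : v ∈ C := (hC v).2 ⟨hv, SimpleGraph.Reachable.refl _⟩
  have hclose : ∀ u ∈ C, ∀ w ∈ S, (Gp ⊔ Gn).Adj u w → w ∈ C := by
    intro u hu w hw hadj
    obtain ⟨huS, hr⟩ := (hC u).1 hu
    have hadj' : ((Gp ⊔ Gn).induce S).Adj ⟨u, huS⟩ ⟨w, hw⟩ := by simpa using hadj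
    exact (hC w).2 ⟨hw, hr.trans hadj'.reachable⟩
  refine ⟨⟨v, hvC⟩, fun u hu => ?_⟩
  have huS := hCS hu
  have hp : C ∩ {w | Gp.Adj u w} = S ∩ {w | Gp.Adj u w} := by
    refine subset_antisymm (inter_subset_inter_left _ hCS) ?_
    rintro w ⟨hwS, hadj⟩
    exact ⟨hclose u hu w hwS (Or.inl hadj), hadj⟩
  have hn : C ∩ {w | Gn.Adj u w} = S ∩ {w | Gn.Adj u w} := by
    refine subset_antisymm (inter_subset_inter_left _ hCS) ?_
    rintro w ⟨hwS, hadj⟩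
    exact ⟨hclose u hu w hwS (Or.inr hadj), hadj⟩
  have hnc : Cᶜ ∩ {w | Gn.Adj u w} = Sᶜ ∩ {w | Gn.Adj u w} := by
    ext w
    simp only [mem_inter_iff, mem_compl_iff, mem_setOf_eq]
    constructor
    · rintro ⟨hwC, hadj⟩
      exact ⟨fun hwS => hwC (hclose u hu w hwS (Or.inr hadj)), hadj⟩
    · rintro ⟨hwS, hadj⟩
      exact ⟨fun hwC => hwS (hCS hwC), hadj⟩
  obtain ⟨h1, h2⟩ := hdef u huS
  constructor
  · simpa [ndegOn, hp, hn] using h1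
  · simpa [ndegOn, hp, hnc] using h2
end

section
/- Let G be a balanced signed complete graph on n vertices with partition (V₁, V₂), |V₁| ≥ |V₂| ≥ 1, where edges inside each V_i are positive and edges between V₁ and V₂ are negative. Then any subset S ⊆ V₁ with |S| = |V₂| is a defensive alliance, and a_sd(G) = |V₂|. -/
open Set

variable {V : Type*}

/-- Neighbor set of `v ∈ A` in the negative graph is `B`. -/
lemma nbrGn_aux (Gn : SimpleGraph V) (A B : Set V) (hdV : Disjoint A B)
    (hN : ∀ u w : V, u ≠ w → (Gn.Adj u w ↔ ((u ∈ A ∧ w ∈ B) ∨ (u ∈ B ∧ w ∈ A))))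
    (v : V) (hv : v ∈ A) : {u | Gn.Adj v u} = B := by
  ext u
  simp only [mem_setOf_eq]
  constructor
  · intro h
    rcases (hN v u h.ne).mp h with ⟨_, hu⟩ | ⟨hv2, _⟩
    · exact hu
    · exact absurd hv2 (disjoint_right.mp hdV.symm hv)
  · intro hu
    have hne' : v ≠ u := fun h => (disjoint_left.mp hdV hv) (h ▸ hu)
    exact (hN v u hne').mpr (Or.inl ⟨hv, hu⟩)

/-- Neighbor set of `v ∈ A` in the positive graph is `A \ {v}`. -/
lemma nbrGp_aux (Gp : SimpleGraph V) (A B : Set V) (hdV : Disjoint A B)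
    (hP : ∀ u w : V, u ≠ w → (Gp.Adj u w ↔ ((u ∈ A ∧ w ∈ A) ∨ (u ∈ B ∧ w ∈ B))))
    (v : V) (hv : v ∈ A) : {u | Gp.Adj v u} = A \ {v} := by
  ext u
  simp only [mem_setOf_eq, mem_diff, mem_singleton_iff]
  constructor
  · intro h
    rcases (hP v u h.ne).mp h with ⟨_, hu⟩ | ⟨hv2, _⟩
    · exact ⟨hu, h.ne'⟩
    · exact absurd hv2 (disjoint_left.mp hdV hv)
  · rintro ⟨hu, hne⟩
    exact (hP v u (fun h => hne h.symm)).mpr (Or.inl ⟨hv, hu⟩)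

lemma lower_aux [Fintype V] (Gp Gn : SimpleGraph V) (A B : Set V)
    (hcover : A ∪ B = Set.univ) (hdV : Disjoint A B)
    (hP : ∀ u w : V, u ≠ w → (Gp.Adj u w ↔ ((u ∈ A ∧ w ∈ A) ∨ (u ∈ B ∧ w ∈ B))))
    (hN : ∀ u w : V, u ≠ w → (Gn.Adj u w ↔ ((u ∈ A ∧ w ∈ B) ∨ (u ∈ B ∧ w ∈ A))))
    (S : Set V) (h : IsDefAlliance Gp Gn S) (v : V) (hv : v ∈ S) (hvA : v ∈ A) :
    B.ncard ≤ S.ncard := by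
  obtain ⟨-, hcond⟩ := h
  have h2 := (hcond v hv).2
  have hGn : ndegOn Gn Sᶜ v = (Sᶜ ∩ B).ncard := by
    rw [ndegOn, nbrGn_aux Gn A B hdV hN v hvA]
  have hGpset : S ∩ {u | Gp.Adj v u} = (S ∩ A) \ {v} := by
    rw [nbrGp_aux Gp A B hdV hP v hvA, inter_diff_assoc]
  have hGp : ndegOn Gp S v = (S ∩ A).ncard - 1 := by
    rw [ndegOn, hGpset, Set.ncard_diff_singleton_of_mem (show v ∈ S ∩ A from ⟨hv, hvA⟩)]
  have hvSA : 1 ≤ (S ∩ A).ncard := by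
    have : (S ∩ A).Nonempty := ⟨v, hv, hvA⟩
    exact (Set.ncard_pos (Set.toFinite _)).mpr this
  have hA : (S ∩ B).ncard + (Sᶜ ∩ B).ncard = B.ncard := by
    rw [← Set.ncard_union_eq (by
        exact Set.disjoint_of_subset (inter_subset_left) (inter_subset_left)
          disjoint_compl_right) (Set.toFinite _) (Set.toFinite _)]
    congr 1
    rw [← union_inter_distrib_right, union_compl_self, univ_inter]
  have hB : (S ∩ A).ncard + (S ∩ B).ncard = S.ncard := by
    rw [← Set.ncard_union_eq (by
        exact Set.disjoint_of_subset (inter_subset_right) (inter_subset_right) hdV)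
      (Set.toFinite _) (Set.toFinite _)]
    congr 1
    rw [← inter_union_distrib_left, hcover, inter_univ]
  rw [hGn, hGp] at h2
  omega

theorem stmt12 [Fintype V] (Gp Gn : SimpleGraph V) (hdisj : Disjoint Gp Gn)
    (V₁ V₂ : Set V) (hcover : V₁ ∪ V₂ = Set.univ) (hdV : Disjoint V₁ V₂)
    (hne : V₂.Nonempty) (hle : V₂.ncard ≤ V₁.ncard)
    (hP : ∀ u w : V, u ≠ w →
      (Gp.Adj u w ↔ ((u ∈ V₁ ∧ w ∈ V₁) ∨ (u ∈ V₂ ∧ w ∈ V₂))))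
    (hN : ∀ u w : V, u ≠ w →
      (Gn.Adj u w ↔ ((u ∈ V₁ ∧ w ∈ V₂) ∨ (u ∈ V₂ ∧ w ∈ V₁)))) :
    (∀ S : Set V, S ⊆ V₁ → S.ncard = V₂.ncard → IsDefAlliance Gp Gn S) ∧
      asd Gp Gn = V₂.ncard := by
  have hNs : ∀ u w : V, u ≠ w →
      (Gn.Adj u w ↔ ((u ∈ V₂ ∧ w ∈ V₁) ∨ (u ∈ V₁ ∧ w ∈ V₂))) := by
    intro u w huw; rw [hN u w huw]; tauto
  have hPs : ∀ u w : V, u ≠ w →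
      (Gp.Adj u w ↔ ((u ∈ V₂ ∧ w ∈ V₂) ∨ (u ∈ V₁ ∧ w ∈ V₁))) := by
    intro u w huw; rw [hP u w huw]; tauto
  have hk : 1 ≤ V₂.ncard := (Set.ncard_pos (Set.toFinite _)).mpr hne
  have part1 : ∀ S : Set V, S ⊆ V₁ → S.ncard = V₂.ncard → IsDefAlliance Gp Gn S := by
    intro S hS hcard
    have hSne : S.Nonempty := Set.nonempty_of_ncard_ne_zero (by omega)
    refine ⟨hSne, fun v hv => ?_⟩
    have hvA : v ∈ V₁ := hS hv
    have hSV2 : S ∩ V₂ = ∅ := by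
      rw [eq_empty_iff_forall_notMem]
      exact fun x ⟨hxS, hxB⟩ => disjoint_left.mp hdV (hS hxS) hxB
    have hGnS : ndegOn Gn S v = 0 := by
      rw [ndegOn, nbrGn_aux Gn V₁ V₂ hdV hN v hvA, hSV2, Set.ncard_empty]
    have hGnSc : ndegOn Gn Sᶜ v = V₂.ncard := by
      rw [ndegOn, nbrGn_aux Gn V₁ V₂ hdV hN v hvA]
      congr 1
      rw [inter_eq_right]
      intro x hx
      exact fun hxS => (eq_empty_iff_forall_notMem.mp hSV2 x) ⟨hxS, hx⟩
    have hGpS : ndegOn Gp S v = S.ncard - 1 := by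
      rw [ndegOn, nbrGp_aux Gp V₁ V₂ hdV hP v hvA]
      have : S ∩ (V₁ \ {v}) = S \ {v} := by
        ext u; simp only [mem_inter_iff, mem_diff, mem_singleton_iff]
        exact ⟨fun ⟨h1, _, h3⟩ => ⟨h1, h3⟩, fun ⟨h1, h2⟩ => ⟨h1, hS h1, h2⟩⟩
      rw [this, Set.ncard_diff_singleton_of_mem hv]
    rw [hGnS, hGnSc, hGpS, hcard]
    omega
  refine ⟨part1, ?_⟩
  obtain ⟨S, hSsub, hScard⟩ := Set.exists_subset_card_eq hle
  have hmem : V₂.ncard ∈ {n | ∃ S : Set V, IsDefAlliance Gp Gn S ∧ S.ncard = n} :=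
    ⟨S, part1 S hSsub hScard, hScard⟩
  refine le_antisymm (Nat.sInf_le hmem) (le_csInf ⟨_, hmem⟩ ?_)
  rintro n ⟨T, hT, rfl⟩
  obtain ⟨⟨v, hv⟩, -⟩ := id hT
  have hvu : v ∈ V₁ ∪ V₂ := hcover ▸ mem_univ v
  rcases hvu with hvA | hvB
  · exact lower_aux Gp Gn V₁ V₂ hcover hdV hP hN T hT v hv hvA
  · exact le_trans hle
      (lower_aux Gp Gn V₂ V₁ (by rw [union_comm]; exact hcover) hdV.symm hPs hNs T hT v hv hvB)
end

section
/- Let G be a k-balanced signed complete graph on n vertices with clusters V₁, ..., V_k, and suppose |V₁| ≥ n/3 and |V₂| ≥ n/3. Then for any S₁ ⊆ V₁ and S₂ ⊆ V₂ with |S₁| = |S₂| = ⌈(n − |V₂|)/2⌉, the set S₁ ∪ S₂ is a defensive alliance of G. -/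
open Set

variable {V : Type*}

private lemma aux_sets {ι : Type*} (Gp Gn : SimpleGraph V)
    (f : V → ι)
    (hP : ∀ u w : V, u ≠ w → (Gp.Adj u w ↔ f u = f w))
    (hN : ∀ u w : V, u ≠ w → (Gn.Adj u w ↔ f u ≠ f w))
    (a b : ι) (hab : a ≠ b)
    (Sa Sb : Set V) (hSa : Sa ⊆ {u : V | f u = a}) (hSb : Sb ⊆ {u : V | f u = b})
    (v : V) (hv : v ∈ Sa) :
    (Sa ∪ Sb) ∩ {u | Gp.Adj v u} = Sa \ {v} ∧
    (Sa ∪ Sb) ∩ {u | Gn.Adj v u} = Sb ∧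
    (Sa ∪ Sb)ᶜ ∩ {u | Gn.Adj v u} = {u : V | f u = a}ᶜ \ Sb := by
  have fva : f v = a := hSa hv
  refine ⟨?_, ?_, ?_⟩
  · ext u
    simp only [mem_inter_iff, mem_union, mem_diff, mem_setOf_eq, mem_singleton_iff]
    constructor
    · rintro ⟨hu, hadj⟩
      have hne : v ≠ u := hadj.ne
      have hfvu : f v = f u := (hP v u hne).1 hadj
      rcases hu with hu | hu
      · exact ⟨hu, hne.symm⟩
      · exact absurd (fva.symm.trans (hfvu.trans (hSb hu))) hab
    · rintro ⟨hu, hne⟩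
      refine ⟨Or.inl hu, (hP v u (Ne.symm hne)).2 (fva.trans (hSa hu).symm)⟩
  · ext u
    simp only [mem_inter_iff, mem_union, mem_setOf_eq]
    constructor
    · rintro ⟨hu, hadj⟩
      have hne : v ≠ u := hadj.ne
      have hfvu : f v ≠ f u := (hN v u hne).1 hadj
      rcases hu with hu | hu
      · exact absurd (fva.trans (hSa hu).symm) hfvu
      · exact hu
    · intro hu
      have hfu : f u = b := hSb hu
      have hne : v ≠ u := by
        intro h; exact hab (fva.symm.trans (h ▸ hfu))
      exact ⟨Or.inr hu, (hN v u hne).2 (by rw [fva, hfu]; exact hab)⟩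
  · ext u
    simp only [mem_inter_iff, mem_compl_iff, mem_union, mem_diff, mem_setOf_eq]
    constructor
    · rintro ⟨hu, hadj⟩
      have hne : v ≠ u := hadj.ne
      have hfvu : f v ≠ f u := (hN v u hne).1 hadj
      exact ⟨fun h => hfvu (fva.trans h.symm), fun h => hu (Or.inr h)⟩
    · rintro ⟨hfu, hub⟩
      have hne : v ≠ u := by intro h; exact hfu (h ▸ fva)
      refine ⟨fun h => ?_, (hN v u hne).2 (fun h => hfu (h ▸ fva))⟩
      rcases h with h | h
      · exact hfu (hSa h)
      · exact hub h

theorem stmt15 [Fintype V] {ι : Type*} (Gp Gn : SimpleGraph V) (hdisj : Disjoint Gp Gn)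
    (f : V → ι) (hsurj : Function.Surjective f)
    (hP : ∀ u w : V, u ≠ w → (Gp.Adj u w ↔ f u = f w))
    (hN : ∀ u w : V, u ≠ w → (Gn.Adj u w ↔ f u ≠ f w))
    (i₁ i₂ : ι) (hii : i₁ ≠ i₂)
    (h1 : Fintype.card V ≤ 3 * {u : V | f u = i₁}.ncard)
    (h2 : Fintype.card V ≤ 3 * {u : V | f u = i₂}.ncard)
    (h21 : {u : V | f u = i₂}.ncard ≤ {u : V | f u = i₁}.ncard)
    (S₁ S₂ : Set V) (hS₁ : S₁ ⊆ {u : V | f u = i₁}) (hS₂ : S₂ ⊆ {u : V | f u = i₂})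
    (hc₁ : S₁.ncard = (Fintype.card V - {u : V | f u = i₂}.ncard + 1) / 2)
    (hc₂ : S₂.ncard = (Fintype.card V - {u : V | f u = i₂}.ncard + 1) / 2) :
    IsDefAlliance Gp Gn (S₁ ∪ S₂) := by
  classical
  set A := {u : V | f u = i₁} with hA
  set B := {u : V | f u = i₂} with hB
  set n := Fintype.card V with hn
  have hAB : Disjoint A B := by
    rw [Set.disjoint_left]
    intro u hu hu'
    exact hii ((hu : f u = i₁).symm.trans hu')
  have hABn : A.ncard + B.ncard ≤ n := by
    rw [← Set.ncard_union_eq hAB]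
    have := Set.ncard_le_ncard (Set.subset_univ (A ∪ B)) (Set.finite_univ)
    rwa [Set.ncard_univ, Nat.card_eq_fintype_card] at this
  have hA1 : 1 ≤ A.ncard := by
    obtain ⟨v, hv⟩ := hsurj i₁
    have : A.Nonempty := ⟨v, hv⟩
    exact (Set.ncard_pos A.toFinite).2 this
  have hs1 : 1 ≤ S₁.ncard := by rw [hc₁]; omega
  have hcompA : A.ncard + Aᶜ.ncard = n := by
    rw [hn, ← Nat.card_eq_fintype_card]; exact Set.ncard_add_ncard_compl A
  have hcompB : B.ncard + Bᶜ.ncard = n := by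
    rw [hn, ← Nat.card_eq_fintype_card]; exact Set.ncard_add_ncard_compl B
  have hS2A : S₂ ⊆ Aᶜ := fun u hu h => hii (((h : f u = i₁)).symm.trans (hS₂ hu))
  have hS1B : S₁ ⊆ Bᶜ := fun u hu h => hii ((hS₁ hu).symm.trans (h : f u = i₂))
  constructor
  · obtain ⟨v, hv⟩ := (Set.ncard_pos S₁.toFinite).1 hs1
    exact ⟨v, Or.inl hv⟩
  · intro v hv
    rcases hv with hv | hv
    · obtain ⟨e1, e2, e3⟩ := aux_sets Gp Gn f hP hN i₁ i₂ hii S₁ S₂ hS₁ hS₂ v hv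
      simp only [ndegOn]
      rw [e1, e2, e3]
      rw [Set.ncard_diff_singleton_of_mem hv, Set.ncard_diff hS2A]
      constructor
      · rw [hc₁, hc₂]; omega
      · rw [hc₁, hc₂]; omega
    · obtain ⟨e1, e2, e3⟩ := aux_sets Gp Gn f hP hN i₂ i₁ hii.symm S₂ S₁ hS₂ hS₁ v hv
      rw [Set.union_comm S₂ S₁] at e1 e2 e3
      simp only [ndegOn]
      rw [e1, e2, e3]
      rw [Set.ncard_diff_singleton_of_mem hv, Set.ncard_diff hS1B]
      constructor
      · rw [hc₁, hc₂]; omega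
      · rw [hc₁, hc₂]; omega
end

section
/- In a k-balanced signed complete graph on n vertices in which all clusters have size exactly n/3 (so k = 3), there is no defensive alliance that intersects all three clusters. -/
open Set

variable {V : Type*}

theorem stmt16 [Fintype V] {ι : Type*} (Gp Gn : SimpleGraph V) (hdisj : Disjoint Gp Gn)
    (f : V → ι) (hsurj : Function.Surjective f)
    (hP : ∀ u w : V, u ≠ w → (Gp.Adj u w ↔ f u = f w))
    (hN : ∀ u w : V, u ≠ w → (Gn.Adj u w ↔ f u ≠ f w))
    (hthird : ∀ i : ι, 3 * {u : V | f u = i}.ncard = Fintype.card V) :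
    ∀ S : Set V, IsDefAlliance Gp Gn S → ¬ (∀ i : ι, ∃ v ∈ S, f v = i) := by
  classical
  rintro S ⟨hSne, hall⟩ hmeet
  obtain ⟨v0, hv0⟩ := hSne
  have hnpos : 0 < Fintype.card V := Fintype.card_pos_iff.mpr ⟨v0⟩
  -- there are at least three distinct values of f
  have hex2 : ∃ u : V, f u ≠ f v0 := by
    by_contra h
    push_neg at h
    have huniv : {u : V | f u = f v0} = Set.univ := by
      ext u; simp [h u]
    have := hthird (f v0)
    rw [huniv, Set.ncard_univ, Nat.card_eq_fintype_card] at this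
    omega
  obtain ⟨u1, hu1⟩ := hex2
  have hex3 : ∃ w : V, f w ≠ f v0 ∧ f w ≠ f u1 := by
    by_contra h
    push_neg at h
    have hsub : (Set.univ : Set V) ⊆ {x : V | f x = f v0} ∪ {x : V | f x = f u1} := by
      intro x _
      by_cases hx : f x = f v0
      · exact Or.inl hx
      · exact Or.inr (h x hx)
    have hle : Fintype.card V ≤ {x : V | f x = f v0}.ncard + {x : V | f x = f u1}.ncard := by
      calc Fintype.card V = (Set.univ : Set V).ncard := by
            rw [Set.ncard_univ, Nat.card_eq_fintype_card]
        _ ≤ ({x : V | f x = f v0} ∪ {x : V | f x = f u1}).ncard :=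
            Set.ncard_le_ncard hsub (Set.toFinite _)
        _ ≤ _ := Set.ncard_union_le _ _
    have h1 := hthird (f v0)
    have h2 := hthird (f u1)
    have hne : {x : V | f x = f v0}.ncard = {x : V | f x = f u1}.ncard := by omega
    omega
  obtain ⟨w1, hw1, hw1'⟩ := hex3
  set i1 := f v0 with hi1
  set i2 := f u1 with hi2
  set i3 := f w1 with hi3
  -- the key inequality
  have key : ∀ v ∈ S, ∀ j k : ι, j ≠ f v → k ≠ f v → j ≠ k →
      (S ∩ {x | f x = j}).ncard + (S ∩ {x | f x = k}).ncard ≤ (S ∩ {x | f x = f v}).ncard := by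
    intro v hv j k hj hk hjk
    have hcond := (hall v hv).1
    -- lower bound on negative degree
    have hlow : (S ∩ {x | f x = j}).ncard + (S ∩ {x | f x = k}).ncard ≤ ndegOn Gn S v := by
      have hdisj' : Disjoint (S ∩ {x | f x = j}) (S ∩ {x | f x = k}) := by
        rw [Set.disjoint_left]
        rintro x ⟨-, hxj⟩ ⟨-, hxk⟩
        exact hjk (hxj ▸ hxk ▸ rfl)
      have hsub : (S ∩ {x | f x = j}) ∪ (S ∩ {x | f x = k}) ⊆ S ∩ {u | Gn.Adj v u} := by
        rintro x (⟨hxS, hxj⟩ | ⟨hxS, hxk⟩)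
        · refine ⟨hxS, ?_⟩
          have hne : v ≠ x := by
            intro he; exact hj (by rw [he, hxj])
          exact (hN v x hne).mpr (by simp only [Set.mem_setOf_eq] at hxj; rw [hxj]; exact fun he => hj he.symm)
        · refine ⟨hxS, ?_⟩
          have hne : v ≠ x := by
            intro he; exact hk (by rw [he, hxk])
          exact (hN v x hne).mpr (by simp only [Set.mem_setOf_eq] at hxk; rw [hxk]; exact fun he => hk he.symm)
      calc (S ∩ {x | f x = j}).ncard + (S ∩ {x | f x = k}).ncard
          = ((S ∩ {x | f x = j}) ∪ (S ∩ {x | f x = k})).ncard :=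
            (Set.ncard_union_eq hdisj' (Set.toFinite _) (Set.toFinite _)).symm
        _ ≤ (S ∩ {u | Gn.Adj v u}).ncard := Set.ncard_le_ncard hsub (Set.toFinite _)
        _ = ndegOn Gn S v := rfl
    -- upper bound on positive degree
    have hvmem : v ∈ S ∩ {x | f x = f v} := ⟨hv, rfl⟩
    have hpos : 1 ≤ (S ∩ {x | f x = f v}).ncard :=
      (Set.ncard_pos (Set.toFinite _)).mpr ⟨v, hvmem⟩
    have hup : ndegOn Gp S v ≤ (S ∩ {x | f x = f v}).ncard - 1 := by
      have hsub : S ∩ {u | Gp.Adj v u} ⊆ (S ∩ {x | f x = f v}) \ {v} := by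
        rintro x ⟨hxS, hxadj⟩
        have hne : v ≠ x := (Gp.ne_of_adj hxadj)
        refine ⟨⟨hxS, ?_⟩, ?_⟩
        · exact ((hP v x hne).mp hxadj).symm
        · simp only [Set.mem_singleton_iff]
          exact fun he => hne he.symm
      calc ndegOn Gp S v ≤ ((S ∩ {x | f x = f v}) \ {v}).ncard :=
            Set.ncard_le_ncard hsub (Set.toFinite _)
        _ = (S ∩ {x | f x = f v}).ncard - 1 := Set.ncard_diff_singleton_of_mem hvmem
    omega
  -- apply at witnesses in clusters i2 and i3
  obtain ⟨v2, hv2S, hv2⟩ := hmeet i2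
  obtain ⟨v3, hv3S, hv3⟩ := hmeet i3
  have k2 := key v2 hv2S i1 i3 (by rw [hv2]; exact fun h => hu1 h.symm) (by rw [hv2]; exact fun h => hw1' h) (fun h => hw1 h.symm)
  have k3 := key v3 hv3S i1 i2 (by rw [hv3]; exact fun h => hw1 h.symm) (by rw [hv3]; exact fun h => hw1' h.symm) (fun h => hu1 h.symm)
  rw [hv2] at k2
  rw [hv3] at k3
  have ha1 : 1 ≤ (S ∩ {x | f x = i1}).ncard :=
    (Set.ncard_pos (Set.toFinite _)).mpr ⟨v0, hv0, rfl⟩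
  omega
end
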